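/- For every nonnegative integer k and each r ∈ {0,...,5}, the number of partitions of 6k+r into exactly 3 positive parts equals h*_r·C(k+2,2) + h*_{r+6}·C(k+1,2) + h*_{r+12}·C(k,2), where h*_i is the number of positive-integer triples μ with μ₁ ≥ μ₂ ≥ μ₃, μ₁−μ₂ ≤ 5, μ₂−μ₃ ≤ 2, μ₃ ≤ 2, and μ₁+μ₂+μ₃ = i. -/
import Mathlib

set_option maxRecDepth 40000

open Finset

/-- The set of partitions of `n` into exactly 3 positive parts, as triples
`(a, b, c)` with `a ≥ b ≥ c ≥ 1` and `a + b + c = n`. -/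
def P3 (n : ℕ) : Finset (ℕ × ℕ × ℕ) :=
  (Finset.range (n+1) ×ˢ Finset.range (n+1) ×ˢ Finset.range (n+1)).filter
    (fun t => t.2.1 ≤ t.1 ∧ t.2.2 ≤ t.2.1 ∧ 1 ≤ t.2.2 ∧ t.1 + t.2.1 + t.2.2 = n)

/-- `p3 n` is the number of partitions of `n` into exactly 3 positive parts. -/
def p3 (n : ℕ) : ℕ := (P3 n).card

/-- `hstar i` is the number of positive-integer triples `μ₁ ≥ μ₂ ≥ μ₃` with
`μ₁ − μ₂ ≤ 5`, `μ₂ − μ₃ ≤ 2`, `μ₃ ≤ 2` and `μ₁ + μ₂ + μ₃ = i`. -/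
def hstar (i : ℕ) : ℕ :=
  ((Finset.range (i+1) ×ˢ Finset.range (i+1) ×ˢ Finset.range (i+1)).filter
    (fun μ : ℕ × ℕ × ℕ =>
      1 ≤ μ.2.2 ∧ μ.2.2 ≤ μ.2.1 ∧ μ.2.1 ≤ μ.1 ∧
        μ.1 - μ.2.1 ≤ 5 ∧ μ.2.1 - μ.2.2 ≤ 2 ∧ μ.2.2 ≤ 2 ∧
        μ.1 + μ.2.1 + μ.2.2 = i)).card

lemma hstar0 : hstar 0 = 0 := by decide
lemma hstar1 : hstar 1 = 0 := by decide
lemma hstar2 : hstar 2 = 0 := by decide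
lemma hstar3 : hstar 3 = 1 := by decide
lemma hstar4 : hstar 4 = 1 := by decide
lemma hstar5 : hstar 5 = 2 := by decide
lemma hstar6 : hstar 6 = 3 := by decide
lemma hstar7 : hstar 7 = 4 := by decide
lemma hstar8 : hstar 8 = 5 := by decide
lemma hstar9 : hstar 9 = 4 := by decide
lemma hstar10 : hstar 10 = 5 := by decide
lemma hstar11 : hstar 11 = 4 := by decide
lemma hstar12 : hstar 12 = 3 := by decide
lemma hstar13 : hstar 13 = 2 := by decide
lemma hstar14 : hstar 14 = 1 := by decide
lemma hstar15 : hstar 15 = 1 := by decide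
lemma hstar16 : hstar 16 = 0 := by decide
lemma hstar17 : hstar 17 = 0 := by decide

lemma p3_0 : p3 0 = 0 := by decide
lemma p3_1 : p3 1 = 0 := by decide
lemma p3_2 : p3 2 = 0 := by decide
lemma p3_3 : p3 3 = 1 := by decide
lemma p3_4 : p3 4 = 1 := by decide
lemma p3_5 : p3 5 = 2 := by decide

lemma mem_P3 {n : ℕ} {t : ℕ × ℕ × ℕ} :
    t ∈ P3 n ↔ t.2.1 ≤ t.1 ∧ t.2.2 ≤ t.2.1 ∧ 1 ≤ t.2.2 ∧ t.1 + t.2.1 + t.2.2 = n := by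
  simp only [P3, Finset.mem_filter, Finset.mem_product, Finset.mem_range]
  omega

lemma p3_step (n : ℕ) : p3 (n + 6) = p3 n + (n + 3) := by
  classical
  set A : Finset (ℕ × ℕ × ℕ) :=
    (P3 n).image (fun t : ℕ × ℕ × ℕ => (t.1 + 3, t.2.1 + 2, t.2.2 + 1)) with hA
  set T1 : Finset (ℕ × ℕ × ℕ) :=
    (Finset.Icc 1 ((n+5)/2)).image (fun b => (n + 5 - b, b, 1)) with hT1
  set T2 : Finset (ℕ × ℕ × ℕ) :=
    (Finset.Icc 2 ((n+6)/3)).image (fun c => (n + 6 - 2*c, c, c)) with hT2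
  set T3 : Finset (ℕ × ℕ × ℕ) :=
    (Finset.Icc ((n+6)/3 + 1) ((n+4)/2)).image (fun a => (a, a, n + 6 - 2*a)) with hT3
  have hP : P3 (n + 6) = A ∪ T1 ∪ T2 ∪ T3 := by
    ext ⟨a, b, c⟩
    simp only [hA, hT1, hT2, hT3, Finset.mem_union, Finset.mem_image, Finset.mem_Icc,
      mem_P3, Prod.mk.injEq, Prod.exists]
    constructor
    · rintro ⟨h1, h2, h3, h4⟩
      by_cases hc : c = 1
      · exact Or.inl (Or.inl (Or.inr ⟨b, by omega, by omega⟩))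
      · by_cases hbc : b = c
        · exact Or.inl (Or.inr ⟨c, by omega, by omega⟩)
        · by_cases hab : a = b
          · exact Or.inr ⟨a, by omega, by omega⟩
          · exact Or.inl (Or.inl (Or.inl ⟨a - 3, b - 2, c - 1, by omega, by omega⟩))
    · rintro (((⟨x, y, z, hm, he⟩ | ⟨x, hx, he⟩) | ⟨x, hx, he⟩) | ⟨x, hx, he⟩) <;> omega
  have dA1 : Disjoint A T1 := by
    rw [Finset.disjoint_left]
    rintro ⟨a, b, c⟩ hA' hB'
    simp only [hA, hT1, Finset.mem_image, Finset.mem_Icc, mem_P3, Prod.mk.injEq,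
      Prod.exists] at hA' hB'
    obtain ⟨x, y, z, hm, h1, h2, h3⟩ := hA'
    obtain ⟨u, hu, e1, e2, e3⟩ := hB'
    omega
  have dA2 : Disjoint (A ∪ T1) T2 := by
    rw [Finset.disjoint_left]
    rintro ⟨a, b, c⟩ hA' hB'
    simp only [hA, hT1, hT2, Finset.mem_union, Finset.mem_image, Finset.mem_Icc, mem_P3,
      Prod.mk.injEq, Prod.exists] at hA' hB'
    obtain ⟨u, hu, e1, e2, e3⟩ := hB'
    rcases hA' with ⟨x, y, z, hm, h1, h2, h3⟩ | ⟨v, hv, f1, f2, f3⟩ <;> omega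
  have dA3 : Disjoint (A ∪ T1 ∪ T2) T3 := by
    rw [Finset.disjoint_left]
    rintro ⟨a, b, c⟩ hA' hB'
    simp only [hA, hT1, hT2, hT3, Finset.mem_union, Finset.mem_image, Finset.mem_Icc, mem_P3,
      Prod.mk.injEq, Prod.exists] at hA' hB'
    obtain ⟨u, hu, e1, e2, e3⟩ := hB'
    rcases hA' with (⟨x, y, z, hm, h1, h2, h3⟩ | ⟨v, hv, f1, f2, f3⟩) | ⟨w, hw, g1, g2, g3⟩ <;>
      omega
  have cA : A.card = p3 n := by
    rw [hA, Finset.card_image_of_injective _ ?_]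
    · rfl
    · rintro ⟨a, b, c⟩ ⟨x, y, z⟩ h
      simp only [Prod.mk.injEq] at h
      simp only [Prod.mk.injEq]
      omega
  have c1 : T1.card = (n+5)/2 := by
    rw [hT1, Finset.card_image_of_injective _ ?_, Nat.card_Icc]
    · omega
    · intro x y h
      simp only [Prod.mk.injEq] at h
      omega
  have c2 : T2.card = (n+6)/3 - 1 := by
    rw [hT2, Finset.card_image_of_injective _ ?_, Nat.card_Icc]
    · omega
    · intro x y h
      simp only [Prod.mk.injEq] at h
      omega
  have c3 : T3.card = (n+4)/2 - (n+6)/3 := by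
    rw [hT3, Finset.card_image_of_injective _ ?_, Nat.card_Icc]
    · omega
    · intro x y h
      simp only [Prod.mk.injEq] at h
      omega
  have : p3 (n + 6) = A.card + T1.card + T2.card + T3.card := by
    rw [p3, hP, Finset.card_union_of_disjoint dA3, Finset.card_union_of_disjoint dA2,
      Finset.card_union_of_disjoint dA1]
  rw [this, cA, c1, c2, c3]
  omega

lemma choose_two_succ (m : ℕ) : (m + 1).choose 2 = m.choose 2 + m := by
  rw [Nat.choose_succ_succ m 1, Nat.choose_one_right, Nat.add_comm]

theorem stmt10 (k r : ℕ) (hr : r ≤ 5) :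
    p3 (6 * k + r) =
      hstar r * (k + 2).choose 2 + hstar (r + 6) * (k + 1).choose 2 +
        hstar (r + 12) * k.choose 2 := by
  induction k with
  | zero =>
    interval_cases r <;>
      norm_num [hstar0, hstar1, hstar2, hstar3, hstar4, hstar5, hstar6, hstar7, hstar8,
        hstar9, hstar10, hstar11, hstar12, hstar13, hstar14, hstar15, hstar16, hstar17,
        p3_0, p3_1, p3_2, p3_3, p3_4, p3_5, Nat.choose]
  | succ k ih =>
    have hs := p3_step (6 * k + r)
    have e : 6 * (k + 1) + r = 6 * k + r + 6 := by ring
    have c3' : (k + 1 + 2).choose 2 = (k + 2).choose 2 + (k + 2) := by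
      rw [show k + 1 + 2 = (k + 2) + 1 by ring, choose_two_succ]
    have c2' : (k + 1 + 1).choose 2 = (k + 1).choose 2 + (k + 1) := choose_two_succ (k + 1)
    have c1' : (k + 1).choose 2 = k.choose 2 + k := choose_two_succ k
    have e1 : hstar r + hstar (r + 6) + hstar (r + 12) = 6 := by
      interval_cases r <;>
        norm_num [hstar0, hstar1, hstar2, hstar3, hstar4, hstar5, hstar6, hstar7, hstar8,
          hstar9, hstar10, hstar11, hstar12, hstar13, hstar14, hstar15, hstar16, hstar17]
    have e2 : 2 * hstar r + hstar (r + 6) = r + 3 := by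
      interval_cases r <;>
        norm_num [hstar0, hstar1, hstar2, hstar3, hstar4, hstar5, hstar6, hstar7, hstar8,
          hstar9, hstar10, hstar11, hstar12, hstar13, hstar14, hstar15, hstar16, hstar17]
    have key : hstar r * (k + 2) + hstar (r + 6) * (k + 1) + hstar (r + 12) * k
        = 6 * k + r + 3 := by
      calc hstar r * (k + 2) + hstar (r + 6) * (k + 1) + hstar (r + 12) * k
          = (hstar r + hstar (r + 6) + hstar (r + 12)) * k
            + (2 * hstar r + hstar (r + 6)) := by ring
        _ = 6 * k + r + 3 := by rw [e1, e2]; ring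
    rw [e, hs, ih, c3', c2', c1']
    ring_nf
    ring_nf at key
    omega
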